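/- Soundness of the subatomic proof system DTsa: if there exists a derivation in DTsa with premiss A and conclusion B, then A implies B, i.e., for every assignment X of Boolean values to atoms, ⟦A⟧_X ≤ ⟦B⟧_X. -/

import Mathlib

namespace SubatomicDT

/-- Formulae of the subatomic language DT: units, disjunction, conjunction,
and atoms (drawn from the countable set ℕ) used as binary connectives. -/
inductive Fm where
  | zero : Fm
  | one : Fm
  | or : Fm → Fm → Fm
  | and : Fm → Fm → Fm
  | atom : ℕ → Fm → Fm → Fm
deriving DecidableEq

/-- Connectives: ∨, ∧ and the atoms. -/
inductive Conn where
  | or : Conn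
  | and : Conn
  | atom : ℕ → Conn
deriving DecidableEq

/-- Apply a connective to two formulae. -/
def Conn.app : Conn → Fm → Fm → Fm
  | .or, A, B => .or A B
  | .and, A, B => .and A B
  | .atom a, A, B => .atom a A B

/-- The "strong" version α̂ of a connective: ∨̂ = ∧̂ = ∧ and â = a. -/
def Conn.up : Conn → Conn
  | .or => .and
  | .and => .and
  | .atom a => .atom a

/-- The "weak" version α̌ of a connective: ∨̌ = ∧̌ = ∨ and ǎ = a. -/
def Conn.down : Conn → Conn
  | .or => .or
  | .and => .or
  | .atom a => .atom a

/-- A connective is an atom. -/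
def Conn.IsAtom : Conn → Prop
  | .atom _ => True
  | _ => False

/-- The equational theory `=` on formulae: the smallest equivalence, closed
under contexts, generated by A∨0 = A, A∧1 = A, 0∧0 = 0, 1∨1 = 1,
0 a 0 = 0 and 1 a 1 = 1 for every atom a. -/
inductive FEq : Fm → Fm → Prop
  | orZero (A) : FEq (.or A .zero) A
  | andOne (A) : FEq (.and A .one) A
  | zeroAndZero : FEq (.and .zero .zero) .zero
  | oneOrOne : FEq (.or .one .one) .one
  | atomZero (a) : FEq (.atom a .zero .zero) .zero
  | atomOne (a) : FEq (.atom a .one .one) .one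
  | refl (A) : FEq A A
  | symm {A B} : FEq A B → FEq B A
  | trans {A B C} : FEq A B → FEq B C → FEq A C
  | orCongr {A B C D} : FEq A B → FEq C D → FEq (.or A C) (.or B D)
  | andCongr {A B C D} : FEq A B → FEq C D → FEq (.and A C) (.and B D)
  | atomCongr (a : ℕ) {A B C D} : FEq A B → FEq C D → FEq (.atom a A C) (.atom a B D)

/-- The rules of system DTsa: all instances of the two subatomic rule shapes
(A β B) α (C β̂ D) ⟶ (A α C) β (B α D) and
(A β B) α (C β D) ⟶ (A α C) β (B α̌ D), plus the equality rules. -/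
inductive DTRule : Fm → Fm → Prop
  | up (α β : Conn) (A B C D : Fm) :
      DTRule (α.app (β.app A B) (β.up.app C D)) (β.app (α.app A C) (α.app B D))
  | down (α β : Conn) (A B C D : Fm) :
      DTRule (α.app (β.app A B) (β.app C D)) (β.app (α.app A C) (α.down.app B D))
  | eq {A B : Fm} : FEq A B → DTRule A B

/-- The rules of system SKSsa: DTsa without the rules whose instances have an
atom in both the α and the β position of the subatomic shape. -/
inductive SKSRule : Fm → Fm → Prop
  | up (α β : Conn) (A B C D : Fm) (h : ¬(α.IsAtom ∧ β.IsAtom)) :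
      SKSRule (α.app (β.app A B) (β.up.app C D)) (β.app (α.app A C) (α.app B D))
  | down (α β : Conn) (A B C D : Fm) (h : ¬(α.IsAtom ∧ β.IsAtom)) :
      SKSRule (α.app (β.app A B) (β.app C D)) (β.app (α.app A C) (α.down.app B D))
  | eq {A B : Fm} : FEq A B → SKSRule A B

/-- Open-deduction derivations over a set of rules `R`: a formula is a
derivation, derivations compose vertically through a rule instance, and
derivations compose horizontally by any connective. -/
inductive Deriv (R : Fm → Fm → Prop) : Fm → Fm → Type
  | form (A : Fm) : Deriv R A A
  | vcomp {A B C D : Fm} (φ : Deriv R A B) (r : R B C) (ψ : Deriv R C D) : Deriv R A D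
  | hcomp {A B C D : Fm} (α : Conn) (φ : Deriv R A B) (ψ : Deriv R C D) :
      Deriv R (α.app A C) (α.app B D)

/-- Size of a formula: the number of occurrences of units in it. -/
def Fm.size : Fm → ℕ
  | .zero => 1
  | .one => 1
  | .or A B => A.size + B.size
  | .and A B => A.size + B.size
  | .atom _ A B => A.size + B.size

/-- Negation of a formula. -/
def Fm.neg : Fm → Fm
  | .zero => .one
  | .one => .zero
  | .or A B => .and A.neg B.neg
  | .and A B => .or A.neg B.neg
  | .atom a A B => .atom a A.neg B.neg

/-- The inference step with premiss `P` and conclusion `Q` is a cut on atom `a`: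
an instance (A a B) ∧ (C a D) ⟶ (A ∧ C) a (B ∧ D) with A = D = 0 and B = C = 1,
or A = D = 1 and B = C = 0, in the equational theory. -/
def IsCut (a : ℕ) (P Q : Fm) : Prop :=
  ∃ A B C D : Fm,
    P = .and (.atom a A B) (.atom a C D) ∧
    Q = .atom a (.and A C) (.and B D) ∧
    ((FEq A .zero ∧ FEq D .zero ∧ FEq B .one ∧ FEq C .one) ∨
     (FEq A .one ∧ FEq D .one ∧ FEq B .zero ∧ FEq C .zero))

/-- An identity on `a` is the dual of a cut on `a`. -/
def IsIdentity (a : ℕ) (P Q : Fm) : Prop := IsCut a Q.neg P.neg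

/-- A derivation is cut-free: it contains no cut on any atom. -/
def Deriv.cutFree {R : Fm → Fm → Prop} : {A B : Fm} → Deriv R A B → Prop
  | _, _, .form _ => True
  | _, _, @Deriv.vcomp _ _ P Q _ φ _ ψ => φ.cutFree ∧ ψ.cutFree ∧ ∀ a, ¬ IsCut a P Q
  | _, _, .hcomp _ φ ψ => φ.cutFree ∧ ψ.cutFree

/-- A derivation is identity-free: it contains no identity on any atom. -/
def Deriv.idFree {R : Fm → Fm → Prop} : {A B : Fm} → Deriv R A B → Prop
  | _, _, .form _ => True
  | _, _, @Deriv.vcomp _ _ P Q _ φ _ ψ => φ.idFree ∧ ψ.idFree ∧ ∀ a, ¬ IsIdentity a P Q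
  | _, _, .hcomp _ φ ψ => φ.idFree ∧ ψ.idFree

/-- A derivation contains no cut on the given atom `a`. -/
def Deriv.cutFreeOn {R : Fm → Fm → Prop} (a : ℕ) : {A B : Fm} → Deriv R A B → Prop
  | _, _, .form _ => True
  | _, _, @Deriv.vcomp _ _ P Q _ φ _ ψ => φ.cutFreeOn a ∧ ψ.cutFreeOn a ∧ ¬ IsCut a P Q
  | _, _, .hcomp _ φ ψ => φ.cutFreeOn a ∧ ψ.cutFreeOn a

/-- Width of a derivation. -/
def Deriv.width {R : Fm → Fm → Prop} : {A B : Fm} → Deriv R A B → ℕ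
  | _, _, .form A => A.size
  | _, _, .vcomp φ _ ψ => max φ.width ψ.width
  | _, _, .hcomp _ φ ψ => φ.width + ψ.width

/-- Height of a derivation. -/
def Deriv.height {R : Fm → Fm → Prop} : {A B : Fm} → Deriv R A B → ℕ
  | _, _, .form _ => 0
  | _, _, .vcomp φ _ ψ => φ.height + ψ.height + 1
  | _, _, .hcomp _ φ ψ => max φ.height ψ.height

/-- Size of a derivation: the number of occurrences of units in it. -/
def Deriv.size {R : Fm → Fm → Prop} : {A B : Fm} → Deriv R A B → ℕ
  | _, _, .form A => A.size
  | _, _, .vcomp φ _ ψ => φ.size + ψ.size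
  | _, _, .hcomp _ φ ψ => φ.size + ψ.size

/-- Semantic interpretation of formulae for an assignment `X : 𝒜 → {0,1}`. -/
def eval (X : ℕ → Bool) : Fm → Bool
  | .zero => false
  | .one => true
  | .or A B => eval X A || eval X B
  | .and A B => eval X A && eval X B
  | .atom a A B => if X a then eval X B else eval X A

/-- The atom `a` occurs in the formula. -/
def Fm.hasAtom (a : ℕ) : Fm → Prop
  | .zero => False
  | .one => False
  | .or A B => A.hasAtom a ∨ B.hasAtom a
  | .and A B => A.hasAtom a ∨ B.hasAtom a
  | .atom b A B => b = a ∨ A.hasAtom a ∨ B.hasAtom a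

/-- Some atom occurs in the formula. -/
def Fm.hasAnyAtom : Fm → Prop
  | .zero => False
  | .one => False
  | .or A B => A.hasAnyAtom ∨ B.hasAnyAtom
  | .and A B => A.hasAnyAtom ∨ B.hasAnyAtom
  | .atom _ _ _ => True

/-- The formula has a nested atom occurrence: an atom occurrence inside
an argument of an atom used as a connective. -/
def Fm.hasNested : Fm → Prop
  | .zero => False
  | .one => False
  | .or A B => A.hasNested ∨ B.hasNested
  | .and A B => A.hasNested ∨ B.hasNested
  | .atom _ A B => A.hasAnyAtom ∨ B.hasAnyAtom

/-- The formula has a nested occurrence of the particular atom `a`. -/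
def Fm.nestedOn (a : ℕ) : Fm → Prop
  | .zero => False
  | .one => False
  | .or A B => A.nestedOn a ∨ B.nestedOn a
  | .and A B => A.nestedOn a ∨ B.nestedOn a
  | .atom _ A B => A.hasAtom a ∨ B.hasAtom a

/-- A is a propositional formula: equal (in the equational theory) to a formula
with no nested atom occurrences. -/
def IsPropF (A : Fm) : Prop := ∃ B, FEq A B ∧ ¬ B.hasNested

/-- The formula contains no conjunction and no disjunction. -/
def Fm.noAndOr : Fm → Prop
  | .zero => True
  | .one => True
  | .or _ _ => False
  | .and _ _ => False
  | .atom _ A B => A.noAndOr ∧ B.noAndOr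

/-- A is a strict decision tree: equal (in the equational theory) to a formula
with no conjunctions or disjunctions. -/
def IsSDT (A : Fm) : Prop := ∃ B, FEq A B ∧ B.noAndOr

/-- Right projection on atom `a` of a formula. -/
def rproj (a : ℕ) : Fm → Fm
  | .zero => .zero
  | .one => .one
  | .or A B => .or (rproj a A) (rproj a B)
  | .and A B => .and (rproj a A) (rproj a B)
  | .atom b A B => if b = a then rproj a B else .atom b (rproj a A) (rproj a B)

/-- Left projection on atom `a` of a formula. -/
def lproj (a : ℕ) : Fm → Fm
  | .zero => .zero
  | .one => .one
  | .or A B => .or (lproj a A) (lproj a B)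
  | .and A B => .and (lproj a A) (lproj a B)
  | .atom b A B => if b = a then lproj a A else .atom b (lproj a A) (lproj a B)

/-- The atom `a` does not occur anywhere in the derivation. -/
def Deriv.noAtom {R : Fm → Fm → Prop} (a : ℕ) : {A B : Fm} → Deriv R A B → Prop
  | _, _, .form A => ¬ A.hasAtom a
  | _, _, .vcomp φ _ ψ => φ.noAtom a ∧ ψ.noAtom a
  | _, _, .hcomp _ φ ψ => φ.noAtom a ∧ ψ.noAtom a

/-- Single-hole contexts. -/
inductive Ctx where
  | hole : Ctx
  | orL : Ctx → Fm → Ctx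
  | orR : Fm → Ctx → Ctx
  | andL : Ctx → Fm → Ctx
  | andR : Fm → Ctx → Ctx
  | atomL : ℕ → Ctx → Fm → Ctx
  | atomR : ℕ → Fm → Ctx → Ctx

/-- Substitute a formula into the hole of a context. -/
def Ctx.fill : Ctx → Fm → Fm
  | .hole, A => A
  | .orL K B, A => .or (K.fill A) B
  | .orR B K, A => .or B (K.fill A)
  | .andL K B, A => .and (K.fill A) B
  | .andR B K, A => .and B (K.fill A)
  | .atomL a K B, A => .atom a (K.fill A) B
  | .atomR a B K, A => .atom a B (K.fill A)

/-- Size of a context: the number of unit occurrences in it. -/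
def Ctx.size : Ctx → ℕ
  | .hole => 0
  | .orL K B => K.size + B.size
  | .orR B K => B.size + K.size
  | .andL K B => K.size + B.size
  | .andR B K => B.size + K.size
  | .atomL _ K B => K.size + B.size
  | .atomR _ B K => B.size + K.size

/-!
Soundness is checked rule by rule. Under a fixed assignment an atom `a` is the selector
`if X a then · else ·`, so each connective denotes a monotone Boolean operation, and the two
subatomic shapes become inequalities between Boolean terms: the instances involving an atom
hold because selection commutes with every connective, the others are instances of medial and
switch. Monotonicity carries soundness through horizontal composition, transitivity through
vertical composition.
-/

theorem eval_eq_of_feq {A B : Fm} (h : FEq A B) (X : ℕ → Bool) : eval X A = eval X B := by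
  induction h <;> simp_all [eval]

def Conn.eval (X : ℕ → Bool) : Conn → Bool → Bool → Bool
  | .or, a, b => a || b
  | .and, a, b => a && b
  | .atom n, a, b => if X n then b else a

theorem eval_app (X : ℕ → Bool) (α : Conn) (A B : Fm) :
    eval X (α.app A B) = α.eval X (eval X A) (eval X B) := by
  cases α <;> rfl

namespace Conn

variable (X : ℕ → Bool) (α β : Conn) {a b c d : Bool}

theorem eval_mono (hac : a ≤ c) (hbd : b ≤ d) :
    α.eval X a b ≤ α.eval X c d := by
  cases α <;> simp only [Conn.eval] <;> (try split_ifs) <;> decide +revert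

theorem eval_up_le :
    α.eval X (β.eval X a b) (β.up.eval X c d) ≤ β.eval X (α.eval X a c) (α.eval X b d) := by
  cases α <;> cases β <;> simp only [Conn.eval, Conn.up] <;> (try split_ifs) <;> decide +revert

theorem eval_down_le :
    α.eval X (β.eval X a b) (β.eval X c d) ≤ β.eval X (α.eval X a c) (α.down.eval X b d) := by
  cases α <;> cases β <;> simp only [Conn.eval, Conn.down] <;> (try split_ifs) <;> decide +revert

end Conn

theorem DTRule.eval_le {A B : Fm} (h : DTRule A B) (X : ℕ → Bool) : eval X A ≤ eval X B := by
  cases h with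
  | up α β =>
    simp only [eval_app]
    exact Conn.eval_up_le X α β
  | down α β =>
    simp only [eval_app]
    exact Conn.eval_down_le X α β
  | eq h => exact (eval_eq_of_feq h X).le

theorem Deriv.eval_le {R : Fm → Fm → Prop} {X : ℕ → Bool}
    (hR : ∀ {A B}, R A B → eval X A ≤ eval X B) {A B : Fm} (d : Deriv R A B) :
    eval X A ≤ eval X B := by
  induction d with
  | form _ => exact le_rfl
  | vcomp _ r _ ih₁ ih₂ => exact ih₁.trans ((hR r).trans ih₂)
  | hcomp α _ _ ih₁ ih₂ =>
    rw [eval_app, eval_app]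
    exact Conn.eval_mono X α ih₁ ih₂

/-- Soundness of DTsa: if there exists a derivation in DTsa with
premiss A and conclusion B, then A implies B, i.e. for every assignment X,
⟦A⟧_X ≤ ⟦B⟧_X. -/
theorem dtsa_soundness {A B : Fm} (h : Nonempty (Deriv DTRule A B)) :
    ∀ X : ℕ → Bool, eval X A ≤ eval X B :=
  fun X => h.some.eval_le fun r => r.eval_le X

end SubatomicDT
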